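/- arXiv:2509.05854 — 2 statements merged into one kernel-verified Lean document; each statement's English description precedes it below -/
import Mathlib

section
/- Let X be a Hausdorff topological space and suppose the point x ∈ X has a local base (B_n)_{n∈ℕ} of open neighborhoods which is strictly decreasing (B_n ⊋ B_{n+1} for all n). For each n let D_n = B_n \ B_{n+1} and κ_n = |D_n|. Then 𝐬𝐞𝐪(x, X) = (CS(x,X), CS(x,X), ii) is Tukey equivalent to the relation ((∏_n [κ_n]^{<ω})_∞, i_∞). -/
open Set Topology Filter

universe u v u' v'

/-- A relation: a triple consisting of a domain, a range, and a relation between them. -/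
structure TRel : Type (max (u + 1) (v + 1)) where
  dom : Type u
  rng : Type v
  rel : dom → rng → Prop

namespace TRel

/-- A Tukey morphism from `A` to `B`: `A ≥_T B`. -/
def Tukey (A : TRel.{u, v}) (B : TRel.{u', v'}) : Prop :=
  ∃ (ψ : B.dom → A.dom) (φ : A.rng → B.rng),
    ∀ (b : B.dom) (a : A.rng), A.rel (ψ b) a → B.rel b (φ a)

/-- Tukey equivalence. -/
def TukeyEquiv (A : TRel.{u, v}) (B : TRel.{u', v'}) : Prop :=
  A.Tukey B ∧ B.Tukey A

/-- `C` is cofinal in the relation `A`. -/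
def Cofinal (A : TRel) (C : Set A.rng) : Prop :=
  ∀ x : A.dom, ∃ y ∈ C, A.rel x y

/-- `U` is bounded in the relation `A`. -/
def Bounded (A : TRel) (U : Set A.dom) : Prop :=
  ∃ y : A.rng, ∀ x ∈ U, A.rel x y

/-- The cofinality of a relation: the least cardinality of a cofinal set. -/
noncomputable def cofin (A : TRel) : Cardinal :=
  sInf {c | ∃ C : Set A.rng, A.Cofinal C ∧ Cardinal.mk C = c}

/-- The additivity of a relation: the least cardinality of an unbounded set. -/
noncomputable def addit (A : TRel) : Cardinal :=
  sInf {c | ∃ U : Set A.dom, ¬A.Bounded U ∧ Cardinal.mk U = c}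

/-- A relation has calibre `(κ, lam)` if every κ-sized subset of the domain has
a lam-sized subset which is bounded. -/
def Calibre (A : TRel) (κ lam : Cardinal) : Prop :=
  ∀ S : Set A.dom, Cardinal.mk S = κ → ∃ T ⊆ S, Cardinal.mk T = lam ∧ A.Bounded T

/-- The product of two relations. -/
def prod (A : TRel.{u, v}) (B : TRel.{u', v'}) : TRel :=
  ⟨A.dom × B.dom, A.rng × B.rng, fun x y => A.rel x.1 y.1 ∧ B.rel x.2 y.2⟩

/-- `A & B`, read `A with B`. -/
def with' (A : TRel.{u, v}) (B : TRel.{u', v'}) : TRel :=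
  ⟨A.dom ⊕ B.dom, A.rng × B.rng,
    fun x y => Sum.elim (fun a => A.rel a y.1) (fun b => B.rel b y.2) x⟩

/-- The sum `A + B` of two relations. -/
def add (A : TRel.{u, v}) (B : TRel.{u', v'}) : TRel :=
  ⟨A.dom ⊕ B.dom, A.rng ⊕ B.rng,
    fun x y =>
      match x, y with
      | Sum.inl a, Sum.inl b => A.rel a b
      | Sum.inr a, Sum.inr b => B.rel a b
      | _, _ => False⟩

/-- The sum of a family of relations. -/
def sigmaSum {ι : Type*} (A : ι → TRel.{u, v}) : TRel :=
  ⟨Σ i, (A i).dom, Σ i, (A i).rng,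
    fun x y => ∃ (i : ι) (a : (A i).dom) (b : (A i).rng),
      x = ⟨i, a⟩ ∧ y = ⟨i, b⟩ ∧ (A i).rel a b⟩

end TRel

/-- `f ≤* g`: eventual domination. -/
def leStar (f g : ℕ → ℕ) : Prop := {n | ¬f n ≤ g n}.Finite

/-- `f ≤_∞ g`: `f n ≤ g n` for infinitely many `n`. -/
def leInf (f g : ℕ → ℕ) : Prop := {n | f n ≤ g n}.Infinite

/-- The relation `(ℕ → ℕ, ≤*)`. -/
def leStarRel : TRel := ⟨ℕ → ℕ, ℕ → ℕ, leStar⟩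

/-- The relation `(ℕ → ℕ, ≤_∞)`. -/
def leInfRel : TRel := ⟨ℕ → ℕ, ℕ → ℕ, leInf⟩

/-- The relation `ω = (ℕ, ℕ, ≤)`. -/
def omegaRel : TRel := ⟨ℕ, ℕ, (· ≤ ·)⟩

/-- The Baire space `(ℕ → ℕ, ≤)` with the coordinatewise order. -/
def baireRel : TRel := ⟨ℕ → ℕ, ℕ → ℕ, (· ≤ ·)⟩

/-- The bounding number `𝔟`. -/
noncomputable def bCard : Cardinal := leStarRel.addit

/-- The dominating number `𝔡`. -/
noncomputable def dCard : Cardinal := leStarRel.cofin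

section Topology

variable (X : Type u) [TopologicalSpace X]

/-- The infinite convergent sequences with their limit: images of embeddings of `ω + 1`. -/
def CSplus : Set (Set X) :=
  {S | ∃ e : OnePoint ℕ → X, Topology.IsEmbedding e ∧ S = Set.range e}

/-- The infinite convergent sequences without their limit. -/
def CS : Set (Set X) :=
  {S | ∃ e : OnePoint ℕ → X, Topology.IsEmbedding e ∧
    S = e '' Set.range ((↑) : ℕ → OnePoint ℕ)}

/-- The infinite convergent sequences converging to `x`, without the limit `x`. -/
def CSpt {X : Type u} [TopologicalSpace X] (x : X) : Set (Set X) :=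
  {S | ∃ e : OnePoint ℕ → X, Topology.IsEmbedding e ∧ e OnePoint.infty = x ∧
    S = e '' Set.range ((↑) : ℕ → OnePoint ℕ)}

/-- The non-closed subsets of `X`. -/
def NC : Set (Set X) := {F | ¬IsClosed F}

/-- `S ̸⊥ T` : `S ∩ T` is not closed in the subspace `T`. -/
def NotClosedIn {X : Type u} [TopologicalSpace X] (S T : Set X) : Prop :=
  ¬∃ C : Set X, IsClosed C ∧ S ∩ T = C ∩ T

/-- The k-structure `𝐤(X) = (CS(X), K(X), ̸⊥)`. -/
def kRel : TRel :=
  ⟨↥(CS X), {K : Set X // IsCompact K}, fun S K => NotClosedIn S.1 K.1⟩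

/-- The compact-cover structure `𝐤𝐜(X) = (X, K(X), ∈)`. -/
def kcRel : TRel :=
  ⟨X, {K : Set X // IsCompact K}, fun x K => x ∈ K.1⟩

/-- The sequential structure `𝐬𝐞𝐪(X) = (CS(X), CS(X), ii)`. -/
def seqRel : TRel :=
  ⟨↥(CS X), ↥(CS X), fun S T => (S.1 ∩ T.1).Infinite⟩

/-- The relation `𝐬𝐞𝐪(x, X) = (CS(x,X), CS(x,X), ii)`. -/
def seqPtRel {X : Type u} [TopologicalSpace X] (x : X) : TRel :=
  ⟨↥(CSpt x), ↥(CSpt x), fun S T => (S.1 ∩ T.1).Infinite⟩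

/-- The set `X′` of non-isolated points of `X`. -/
def nonIsolated : Set X := {x | ¬IsOpen ({x} : Set X)}

/-- The set `X^#` of points of `X` with no compact neighborhood. -/
def nonLC : Set X := {x | ¬∃ K : Set X, IsCompact K ∧ K ∈ nhds x}

end Topology

/-- The relation `P(κ) = ((([κ]^{<ω})^ω)_∞, i_∞)`. -/
def Prel (κ : Cardinal.{u}) : TRel :=
  ⟨{F : ℕ → Finset κ.out // {n | F n ≠ ∅}.Infinite},
   {F : ℕ → Finset κ.out // {n | F n ≠ ∅}.Infinite},
   fun F G => {n | ∃ x, x ∈ F.1 n ∧ x ∈ G.1 n}.Infinite⟩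

/-- The relation `((∏_n [κ_n]^{<ω})_∞, i_∞)` for a sequence of cardinals `κ_n = c n`. -/
def Qrel (c : ℕ → Cardinal.{u}) : TRel :=
  ⟨{F : (n : ℕ) → Finset (c n).out // {n | F n ≠ ∅}.Infinite},
   {F : (n : ℕ) → Finset (c n).out // {n | F n ≠ ∅}.Infinite},
   fun F G => {n | ∃ x, x ∈ F.1 n ∧ x ∈ G.1 n}.Infinite⟩

/-- The relation `(κ, =)` for a cardinal `κ`. -/
def eqCardRel (κ : Cardinal.{u}) : TRel := ⟨κ.out, κ.out, Eq⟩

/-- The relation `(Λ, =)` for a set `Λ`. -/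
def eqSetRel {X : Type u} (A : Set X) : TRel := ⟨↥A, ↥A, Eq⟩

/-- The relation `S(κ) = Σ_n P(κ_n) × (κ_n, =)` for a sequence of cardinals `κ_n = c n`. -/
def Srel (c : ℕ → Cardinal.{u}) : TRel :=
  TRel.sigmaSum fun n => (Prel (c n)).prod (eqCardRel (c n))

/-- The relation `𝟎` with empty domain and range. -/
def zeroRel : TRel := ⟨PEmpty, PEmpty, fun _ _ => False⟩


/-!
The shells `B n \ B (n + 1)` partition `B 0 \ {x}`, and a subset of `X \ {x}` converges to `x`
exactly when it is infinite, countable and meets every shell (and the complement of `B 0`) in a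
finite set. Enumerating the `n`-th shell by `κ n`, a sequence `S` converging to `x` is thus coded by
its traces on the shells, and a sequence `(F n)` of finite sets, infinitely many nonempty, by the
union of the corresponding points. Since the shells are disjoint and the traces finite, two such
sets meet in an infinite set iff their traces meet in infinitely many shells.
-/

open Function

theorem Set.infinite_iff_infinite_setOf_inter_nonempty {α ι : Type*} {A : Set α} {D : ι → Set α}
    (hD : Pairwise (Disjoint on D)) (hA : A ⊆ ⋃ i, D i) (hfin : ∀ i, (A ∩ D i).Finite) :
    A.Infinite ↔ {i | (A ∩ D i).Nonempty}.Infinite := by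
  refine ⟨fun hA_inf hI => hA_inf ?_, fun hI hA_fin => hI ?_⟩
  · refine (hI.biUnion fun i _ => hfin i).subset fun a ha => ?_
    obtain ⟨i, hi⟩ := mem_iUnion.1 (hA ha)
    exact mem_biUnion (x := i) ⟨a, ha, hi⟩ ⟨ha, hi⟩
  · have hsub (a : α) : {i | a ∈ D i}.Subsingleton := fun i hi j hj =>
      hD.eq (not_disjoint_iff.2 ⟨a, hi, hj⟩)
    refine (hA_fin.biUnion fun a _ => (hsub a).finite).subset ?_
    rintro i ⟨a, haA, hai⟩
    exact mem_biUnion haA hai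

theorem mem_CSpt_iff {X : Type*} [TopologicalSpace X] [T2Space X] {x : X} {S : Set X} :
    S ∈ CSpt x ↔ x ∉ S ∧ S.Countable ∧ S.Infinite ∧ ∀ U ∈ 𝓝 x, (S \ U).Finite := by
  constructor
  · rintro ⟨e, he, rfl, rfl⟩
    have hconv := (OnePoint.continuous_iff_from_discrete e).1 he.continuous
    refine ⟨?_, (countable_range _).image _,
      (infinite_range_of_injective OnePoint.coe_injective).image he.injective.injOn,
      fun U hU => ?_⟩
    · rintro ⟨_, ⟨n, rfl⟩, h⟩
      exact OnePoint.coe_ne_infty n (he.injective h)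
    · refine ((mem_cofinite.1 (hconv hU)).image fun n : ℕ => e n).subset ?_
      rintro _ ⟨⟨_, ⟨n, rfl⟩, rfl⟩, hn⟩
      exact ⟨n, hn, rfl⟩
  · rintro ⟨hxS, hS_count, hS_inf, hconv⟩
    have := hS_count.to_subtype
    have := hS_inf.to_subtype
    obtain ⟨g⟩ : Nonempty (ℕ ≃ S) := nonempty_equiv_of_countable
    have hg : Injective fun n => (g n : X) := Subtype.val_injective.comp g.injective
    let e : OnePoint ℕ → X := fun o => o.elim x fun n => g n
    have he_cont : Continuous e := (OnePoint.continuous_iff_from_discrete e).2 fun U hU =>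
      mem_cofinite.2 <| ((hconv U hU).preimage hg.injOn).subset fun n hn => ⟨(g n).2, hn⟩
    have he_inj : Injective e := by
      rintro (_ | m) (_ | n) h
      · rfl
      · exact absurd (h ▸ (g n).2 : e none ∈ S) hxS
      · exact absurd (h.symm ▸ (g m).2 : e none ∈ S) hxS
      · exact congrArg _ (hg h)
    refine ⟨e, (he_cont.isClosedEmbedding he_inj).isEmbedding, rfl, ?_⟩
    rw [← range_comp]
    exact ((EquivLike.range_comp Subtype.val g).trans Subtype.range_coe).symm

section Shells

open Cardinal

variable {X : Type*} {B : ℕ → Set X}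

theorem Antitone.pairwise_disjoint_diff_succ (hB : Antitone B) :
    Pairwise (Disjoint on fun n => B n \ B (n + 1)) :=
  (pairwise_disjoint_on _).2 fun _ _ hmn =>
    disjoint_left.2 fun _ hm hn => hm.2 (hB (Nat.succ_le_of_lt hmn) hn.1)

variable (B) in
noncomputable def shellPt (n : ℕ) (a : (#↥(B n \ B (n + 1))).out) : X :=
  (outMkEquiv a : ↥(B n \ B (n + 1)))

theorem shellPt_injective (n : ℕ) : Injective (shellPt B n) :=
  Subtype.val_injective.comp outMkEquiv.injective

theorem range_shellPt (n : ℕ) : range (shellPt B n) = B n \ B (n + 1) :=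
  (EquivLike.range_comp Subtype.val _).trans Subtype.range_coe

theorem shellPt_mem (n : ℕ) (a : (#↥(B n \ B (n + 1))).out) :
    shellPt B n a ∈ B n \ B (n + 1) :=
  range_shellPt (B := B) n ▸ mem_range_self a

variable (B) in
noncomputable def shellUnion (F : (n : ℕ) → Finset (#↥(B n \ B (n + 1))).out) : Set X :=
  ⋃ n, shellPt B n '' ↑(F n)

theorem shellUnion_subset (F : (n : ℕ) → Finset (#↥(B n \ B (n + 1))).out) :
    shellUnion B F ⊆ ⋃ n, (B n \ B (n + 1)) :=
  iUnion_mono fun n => image_subset_iff.2 fun a _ => shellPt_mem n a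

theorem shellUnion_inter_diff_succ (hB : Antitone B)
    (F : (n : ℕ) → Finset (#↥(B n \ B (n + 1))).out) (n : ℕ) :
    shellUnion B F ∩ (B n \ B (n + 1)) = shellPt B n '' ↑(F n) := by
  refine Subset.antisymm ?_ fun y hy => ⟨mem_iUnion.2 ⟨n, hy⟩, image_subset_iff.2
    (fun a _ => shellPt_mem n a) hy⟩
  rintro _ ⟨hy, hyn⟩
  obtain ⟨m, a, ha, rfl⟩ := mem_iUnion.1 hy
  obtain rfl : m = n := hB.pairwise_disjoint_diff_succ.eq
    (not_disjoint_iff.2 ⟨_, shellPt_mem m a, hyn⟩)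
  exact mem_image_of_mem _ ha

theorem shellUnion_inter_infinite_iff (hB : Antitone B)
    (F : (n : ℕ) → Finset (#↥(B n \ B (n + 1))).out) (T : Set X) :
    (shellUnion B F ∩ T).Infinite ↔ {n | ∃ a, a ∈ F n ∧ shellPt B n a ∈ T}.Infinite := by
  have hpiece (n : ℕ) : shellUnion B F ∩ T ∩ (B n \ B (n + 1)) = shellPt B n '' ↑(F n) ∩ T := by
    rw [inter_right_comm, shellUnion_inter_diff_succ hB]
  rw [infinite_iff_infinite_setOf_inter_nonempty hB.pairwise_disjoint_diff_succ
    (inter_subset_left.trans (shellUnion_subset F))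
    fun n => hpiece n ▸ ((F n).finite_toSet.image _).inter_of_left T]
  simp only [hpiece, Set.Nonempty, mem_inter_iff, mem_image, Finset.mem_coe,
    exists_exists_and_eq_and]

variable [TopologicalSpace X] {x : X}

theorem iUnion_diff_succ_eq_diff_singleton [T1Space X] (hB : (𝓝 x).HasAntitoneBasis B) :
    ⋃ n, (B n \ B (n + 1)) = B 0 \ {x} := by
  ext y
  simp only [mem_iUnion, Set.mem_sdiff, mem_singleton_iff]
  constructor
  · rintro ⟨n, hyn, hy⟩
    exact ⟨hB.antitone n.zero_le hyn, fun h => hy (h ▸ mem_of_mem_nhds (hB.mem (n + 1)))⟩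
  · rintro ⟨hy0, hyx⟩
    classical
    have hex : ∃ n, y ∉ B n := by
      obtain ⟨n, hn⟩ := hB.mem_iff.1 (compl_singleton_mem_nhds (Ne.symm hyx))
      exact ⟨n, fun h => hn h rfl⟩
    obtain ⟨m, hm⟩ : ∃ m, Nat.find hex = m + 1 :=
      Nat.exists_eq_succ_of_ne_zero fun h => (h ▸ Nat.find_spec hex) hy0
    exact ⟨m, not_not.1 (Nat.find_min hex (hm ▸ m.lt_succ_self)), hm ▸ Nat.find_spec hex⟩

variable [T2Space X]

theorem shellUnion_mem_CSpt (hB : (𝓝 x).HasAntitoneBasis B)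
    {F : (n : ℕ) → Finset (#↥(B n \ B (n + 1))).out} (hF : {n | F n ≠ ∅}.Infinite) :
    shellUnion B F ∈ CSpt x := by
  refine mem_CSpt_iff.2 ⟨fun hx => ?_,
    countable_iUnion fun n => ((F n).finite_toSet.image _).countable, ?_, fun U hU => ?_⟩
  · have := iUnion_diff_succ_eq_diff_singleton hB ▸ shellUnion_subset F hx
    exact this.2 rfl
  · have := (shellUnion_inter_infinite_iff hB.antitone F univ).2 <| hF.mono fun n hn =>
      let ⟨a, ha⟩ := Finset.nonempty_iff_ne_empty.2 hn
      ⟨a, ha, trivial⟩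
    rwa [inter_univ] at this
  · obtain ⟨m, hm⟩ := hB.mem_iff.1 hU
    refine ((finite_lt_nat m).biUnion fun n _ => (F n).finite_toSet.image (shellPt B n)).subset ?_
    rintro _ ⟨hy, hyU⟩
    obtain ⟨n, a, ha, rfl⟩ := mem_iUnion.1 hy
    have hnm : n < m := not_le.1 fun h => hyU (hm (hB.antitone h (shellPt_mem n a).1))
    exact mem_biUnion hnm (mem_image_of_mem _ ha)

theorem finite_shellPt_preimage (hB : (𝓝 x).HasAntitoneBasis B) {T : Set X} (hT : T ∈ CSpt x)
    (n : ℕ) : (shellPt B n ⁻¹' T).Finite :=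
  ((mem_CSpt_iff.1 hT).2.2.2 _ (hB.mem (n + 1))).preimage (shellPt_injective n).injOn
    |>.subset fun a ha => ⟨ha, (shellPt_mem n a).2⟩

theorem infinite_setOf_shellPt_preimage_nonempty (hB : (𝓝 x).HasAntitoneBasis B) {T : Set X}
    (hT : T ∈ CSpt x) : {n | (shellPt B n ⁻¹' T).Nonempty}.Infinite := by
  obtain ⟨hxT, -, hT_inf, hconv⟩ := mem_CSpt_iff.1 hT
  have hT0 : (T ∩ B 0).Infinite := by
    simpa only [sdiff_sdiff_right_self] using hT_inf.sdiff (hconv _ (hB.mem 0))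
  refine ((infinite_iff_infinite_setOf_inter_nonempty hB.antitone.pairwise_disjoint_diff_succ
    ?_ fun n => ?_).1 hT0).mono ?_
  · rw [iUnion_diff_succ_eq_diff_singleton hB]
    exact fun y hy => ⟨hy.2, fun h => hxT (h ▸ hy.1)⟩
  · exact (hconv _ (hB.mem (n + 1))).subset fun y hy => ⟨hy.1.1, hy.2.2⟩
  · rintro n ⟨y, ⟨hyT, -⟩, hy⟩
    rw [← range_shellPt] at hy
    obtain ⟨a, rfl⟩ := hy
    exact ⟨a, hyT⟩

noncomputable def shellTrace (hB : (𝓝 x).HasAntitoneBasis B) (T : CSpt x) :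
    (Qrel fun n => #↥(B n \ B (n + 1))).dom :=
  ⟨fun n => (finite_shellPt_preimage hB T.2 n).toFinset,
    (infinite_setOf_shellPt_preimage_nonempty hB T.2).mono fun _ hn h =>
      hn.ne_empty (Finite.toFinset_eq_empty.1 h)⟩

noncomputable def shellSeq (hB : (𝓝 x).HasAntitoneBasis B)
    (F : (Qrel fun n => #↥(B n \ B (n + 1))).dom) : (seqPtRel x).dom :=
  ⟨shellUnion B F.1, shellUnion_mem_CSpt hB F.2⟩

theorem seqPtRel_rel_shellSeq_iff (hB : (𝓝 x).HasAntitoneBasis B)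
    (F : (Qrel fun n => #↥(B n \ B (n + 1))).dom) (T : CSpt x) :
    (seqPtRel x).rel (shellSeq hB F) T ↔ (Qrel _).rel F (shellTrace hB T) := by
  simp only [seqPtRel, Qrel, shellSeq, shellTrace, Finite.mem_toFinset, mem_preimage]
  exact shellUnion_inter_infinite_iff hB.antitone F.1 T

end Shells

/-- if `x` has a strictly decreasing local base `(B n)` of open
neighborhoods, with `D n = B n \ B (n+1)` and `κ n = |D n|`, then
`𝐬𝐞𝐪(x, X) ≡_T ((∏_n [κ_n]^{<ω})_∞, i_∞)`. -/
theorem seqPt_equiv_Qrel (X : Type u) [TopologicalSpace X] [T2Space X] (x : X)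
    (B : ℕ → Set X)
    (hopen : ∀ n, IsOpen (B n)) (hmem : ∀ n, x ∈ B n)
    (hdec : ∀ n, B (n + 1) ⊂ B n)
    (hbase : ∀ U ∈ nhds x, ∃ n, B n ⊆ U) :
    (seqPtRel x).TukeyEquiv (Qrel fun n => Cardinal.mk ↥(B n \ B (n + 1))) := by
  have hB : (𝓝 x).HasAntitoneBasis B :=
    ⟨⟨fun U => ⟨fun hU => (hbase U hU).imp fun _ h => ⟨trivial, h⟩,
      fun ⟨n, _, h⟩ => mem_of_superset ((hopen n).mem_nhds (hmem n)) h⟩⟩,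
      antitone_nat_of_succ_le fun n => (hdec n).subset⟩
  refine ⟨⟨shellSeq hB, shellTrace hB, fun F T => (seqPtRel_rel_shellSeq_iff hB F T).1⟩,
    ⟨shellTrace hB, shellSeq hB, fun S G h => ?_⟩⟩
  have := (seqPtRel_rel_shellSeq_iff hB G S).2 (by simpa only [Qrel, and_comm] using h)
  simpa only [seqPtRel, inter_comm] using this
end

section
/- Let X be a set of cardinality ℵ_ω and let 𝒞 be a family of countable subsets of X such that for every countably infinite subset A of X there exists C ∈ 𝒞 with A ∩ C infinite. Then |𝒞| > ℵ_ω (equivalently, |𝒞| ≥ ℵ_{ω+1}). -/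
/-!
Suppose `|𝒞| ≤ ℵ_ω`. Then `𝒞` is an increasing union of subfamilies `𝒞ₙ` with `|𝒞ₙ| ≤ ℵₙ`,
so `Uₙ = ⋃ 𝒞ₙ` has size at most `ℵₙ < |X|`. Pick distinct points `xₙ ∉ Uₙ`. Every `C ∈ 𝒞`
lies in some `𝒞ₖ`, hence in every `Uₙ` with `n ≥ k`, so it contains at most the points
`x₀, …, xₖ₋₁`: the countably infinite set `{xₙ}` meets no member of `𝒞` in an infinite set.
-/

universe u

open Cardinal Set Function

theorem exists_injective_forall_notMem_of_monotone {X : Type*} {U : ℕ → Set X}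
    (hU : Monotone U) (hinf : ∀ n, (U n)ᶜ.Infinite) :
    ∃ x : ℕ → X, Injective x ∧ ∀ n, x n ∉ U n := by
  classical
  -- Choose pairs `(kₙ, xₙ)` with `xₙ ∉ U kₙ`, the `kₙ` strictly increasing and the `xₙ` distinct.
  obtain ⟨f, hfU, hf⟩ := exists_seq_of_forall_finset_exists (fun p : ℕ × X => p.2 ∉ U p.1)
    (fun p q => p.1 < q.1 ∧ p.2 ≠ q.2) fun s _ => by
      obtain ⟨y, hy, hys⟩ :=
        (hinf (s.sup Prod.fst + 1)).exists_notMem_finset (s.image Prod.snd)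
      refine ⟨(s.sup Prod.fst + 1, y), hy, fun p hp => ⟨Nat.lt_succ_of_le (Finset.le_sup hp), ?_⟩⟩
      rintro rfl
      exact hys (Finset.mem_image_of_mem _ hp)
  have hmono : StrictMono fun n => (f n).1 := fun m n h => (hf m n h).1
  exact ⟨fun n => (f n).2, .of_lt_imp_ne fun m n h => (hf m n h).2,
    fun n hn => hfU n (hU (hmono.id_le n) hn)⟩

theorem exists_countable_infinite_forall_inter_finite_of_monotone {X : Type*} {U : ℕ → Set X}
    (hU : Monotone U) (hinf : ∀ n, (U n)ᶜ.Infinite) :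
    ∃ A : Set X, A.Countable ∧ A.Infinite ∧ ∀ n, (A ∩ U n).Finite := by
  obtain ⟨x, hx, hxU⟩ := exists_injective_forall_notMem_of_monotone hU hinf
  refine ⟨range x, countable_range x, infinite_range_of_injective hx, fun n => ?_⟩
  refine ((finite_Iio n).image x).subset ?_
  rintro _ ⟨⟨m, rfl⟩, hm⟩
  exact ⟨m, not_le.1 fun hnm => hxU m (hU hnm hm), rfl⟩

namespace Cardinal

theorem exists_monotone_cover_of_mk_le_iSup {α : Type u} {κ : ℕ → Cardinal.{u}}
    (hκ : Monotone κ) (hα : #α ≤ ⨆ n, κ n) :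
    ∃ S : ℕ → Set α, Monotone S ∧ (∀ a, ∃ n, a ∈ S n) ∧ ∀ n, #(S n) ≤ κ n := by
  obtain ⟨f⟩ : Nonempty (α ↪ Iio (⨆ n, κ n).ord) := by
    rw [← lift_mk_le', mk_Iio_ordinal, card_ord, lift_lift, lift_le]
    exact hα
  refine ⟨fun n => {a | (f a : Ordinal) < (κ n).ord},
    fun m n hmn a ha => ha.trans_le (ord_le_ord.2 (hκ hmn)), fun a => ?_, fun n => ?_⟩
  · obtain ⟨n, hn⟩ := (lt_ciSup_iff' bddAbove_of_small).1 (lt_ord.1 (f a).2)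
    exact ⟨n, lt_ord.2 hn⟩
  · have := mk_preimage_of_injective_lift _ (Iio (κ n).ord)
      (Subtype.val_injective.comp f.injective)
    rwa [mk_Iio_ordinal, card_ord, lift_lift, lift_le] at this

theorem mk_biUnion_le_mul_aleph0 {ι α : Type u} {A : ι → Set α} {s : Set ι}
    (hA : ∀ i ∈ s, (A i).Countable) : #(⋃ i ∈ s, A i) ≤ #s * ℵ₀ :=
  (mk_biUnion_le A s).trans <| mul_le_mul_right (ciSup_le' fun i : s => (hA i i.2).le_aleph0) _

theorem iSup_aleph_natCast : ⨆ n : ℕ, ℵ_ (n : Ordinal.{u}) = ℵ_ Ordinal.omega0 := by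
  rw [← isNormal_aleph.map_iSup Ordinal.bddAbove_of_small, Ordinal.iSup_natCast]

end Cardinal

theorem lt_mk_of_forall_exists_inter_infinite {X : Type u} {κ : ℕ → Cardinal.{u}}
    (hκ : Monotone κ) (hX : #X = ⨆ n, κ n) (hκX : ∀ n, κ n < #X) (hX₀ : ℵ₀ < #X)
    {𝒞 : Set (Set X)} (hctble : ∀ C ∈ 𝒞, C.Countable)
    (hcatch : ∀ A : Set X, A.Countable → A.Infinite → ∃ C ∈ 𝒞, (A ∩ C).Infinite) :
    #X < #𝒞 := by
  by_contra! h𝒞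
  obtain ⟨S, hSmono, hScover, hS⟩ := exists_monotone_cover_of_mk_le_iSup hκ (hX ▸ h𝒞)
  let U : ℕ → Set X := fun n => ⋃ C ∈ S n, (C : Set X)
  have hU : ∀ n, #(U n) < #X := fun n =>
    (mk_biUnion_le_mul_aleph0 (A := fun C : 𝒞 => (C : Set X)) fun C _ => hctble C C.2).trans_lt <|
      (mul_le_mul_left (hS n) _).trans_lt (mul_lt_of_lt hX₀.le (hκX n) hX₀)
  have : Infinite X := infinite_iff.2 hX₀.le
  have hUc : ∀ n, (U n)ᶜ.Infinite := fun n => by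
    rw [← infinite_coe_iff, infinite_iff, mk_compl_of_infinite _ (hU n)]
    exact hX₀.le
  obtain ⟨A, hActble, hAinf, hAU⟩ := exists_countable_infinite_forall_inter_finite_of_monotone
    (fun m n hmn => biUnion_subset_biUnion_left (hSmono hmn)) hUc
  obtain ⟨C, hC, hAC⟩ := hcatch A hActble hAinf
  obtain ⟨n, hn⟩ := hScover ⟨C, hC⟩
  have hCU : C ⊆ U n := subset_biUnion_of_mem (u := fun C : 𝒞 => (C : Set X)) hn
  exact hAC <| (hAU n).subset <| inter_subset_inter_right A hCU

/-- if `X` has cardinality `ℵ_ω` and `𝒞` is a family of countable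
subsets of `X` such that every countably infinite `A ⊆ X` has infinite
intersection with some member of `𝒞`, then `|𝒞| > ℵ_ω`. -/
theorem family_catching_countable_sets_is_large (X : Type u)
    (hX : Cardinal.mk X = Cardinal.aleph Ordinal.omega0)
    (𝒞 : Set (Set X)) (hctble : ∀ C ∈ 𝒞, C.Countable)
    (hcatch : ∀ A : Set X, A.Countable → A.Infinite →
      ∃ C ∈ 𝒞, (A ∩ C).Infinite) :
    Cardinal.aleph Ordinal.omega0 < Cardinal.mk 𝒞 := by
  rw [← hX]
  refine lt_mk_of_forall_exists_inter_infinite (κ := fun n : ℕ => ℵ_ n)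
    (fun m n hmn => aleph_le_aleph.2 (by exact_mod_cast hmn)) (hX.trans iSup_aleph_natCast.symm)
    (fun n => hX ▸ aleph_lt_aleph.2 (Ordinal.natCast_lt_omega0 n))
    (hX ▸ aleph0_lt_aleph.2 Ordinal.omega0_pos) hctble hcatch
end
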